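/- Let H be a complex separable Hilbert space and A a bounded self-adjoint operator on H. Then there exists a positive trace-class operator V on H such that the closed linear span of the set {(A−λ)⁻¹ V x : x ∈ H, λ ∈ ℂ, Im λ ≠ 0} equals H. -/

import Mathlib

open MeasureTheory Complex Filter Topology Set ComplexConjugate

noncomputable section

variable {H : Type*} [NormedAddCommGroup H] [InnerProductSpace ℂ H] [CompleteSpace H]

/-- `V` is a positive trace-class operator: for some Hilbert basis `(e n)` and a summable
sequence `(l n)` of nonnegative reals, `V x = Σ l n ⟨x, e n⟩ e n`. -/
def IsPositiveTraceClass (V : H →L[ℂ] H) : Prop :=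
  ∃ (ι : Type) (e : ι → H) (l : ι → ℝ),
    Orthonormal ℂ e ∧
    (Submodule.span ℂ (Set.range e)).topologicalClosure = ⊤ ∧
    Summable l ∧ (∀ n : ι, 0 ≤ l n) ∧
    ∀ x : H, V x = ∑' n : ι, ((l n : ℂ) * (inner ℂ (e n) x : ℂ)) • e n

/-- The closed linear span of `{(A−λ)⁻¹ V x : x ∈ H, Im λ ≠ 0}` is all of `H`. -/
def ResolventMaximal (A V : H →L[ℂ] H) : Prop :=
  (Submodule.span ℂ {y : H | ∃ (x : H) (lam : ℂ), lam.im ≠ 0 ∧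
      y = Ring.inverse (A - lam • (1 : H →L[ℂ] H)) (V x)}).topologicalClosure = ⊤

/-! Separability gives a countable Hilbert basis `(e n)`, and countability gives positive summable
weights `l n`. The diagonal operator `V = Σ l n ⟨e n, ·⟩ e n` is then positive trace class, and its
range is dense because it contains every `e n`. Since the spectrum of `A` is real, `(A - i)⁻¹` is
a surjective bounded operator, so the vectors `(A - i)⁻¹ V x` alone are already dense. -/

open InnerProductSpace

section Countability

variable {𝕜 E : Type*} [RCLike 𝕜] [NormedAddCommGroup E] [InnerProductSpace 𝕜 E]

theorem Orthonormal.countable [TopologicalSpace.SeparableSpace E] {ι : Type*} {v : ι → E}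
    (hv : Orthonormal 𝕜 v) : Countable ι := by
  refine Pairwise.countable_of_isOpen_disjoint (s := fun i => Metric.ball (v i) (1 / 2))
    (fun i j hij => Metric.ball_disjoint_ball ?_) (fun _ => Metric.isOpen_ball)
    (fun _ => Metric.nonempty_ball.2 one_half_pos)
  have hsq : ‖v i - v j‖ ^ 2 = 2 := by
    rw [@norm_sub_sq 𝕜, hv.inner_eq_zero hij, hv.norm_eq_one, hv.norm_eq_one]
    norm_num
  rw [dist_eq_norm]
  nlinarith [norm_nonneg (v i - v j)]

variable (𝕜 E) in
theorem exists_countable_hilbertBasis [CompleteSpace E] [TopologicalSpace.SeparableSpace E] :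
    ∃ (ι : Type) (_ : Countable ι), Nonempty (HilbertBasis ι 𝕜 E) := by
  obtain ⟨w, b, -⟩ := exists_hilbertBasis 𝕜 E
  have := b.orthonormal.countable
  let e := equivShrink.{0} w
  refine ⟨Shrink w, Countable.of_equiv w e,
    ⟨HilbertBasis.mk (b.orthonormal.comp _ e.symm.injective) ?_⟩⟩
  rw [e.symm.surjective.range_comp, b.dense_span]

end Countability

namespace HilbertBasis

variable {𝕜 E ι : Type*} [RCLike 𝕜] [NormedAddCommGroup E] [InnerProductSpace 𝕜 E]
  [CompleteSpace E] (b : HilbertBasis ι 𝕜 E) {l : ι → ℝ}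

def diagonalOperator (l : ι → ℝ) : E →L[𝕜] E :=
  ∑' i, (l i : 𝕜) • rankOne 𝕜 (b i) (b i)

theorem summable_smul_rankOne (hl : Summable l) :
    Summable fun i => (l i : 𝕜) • rankOne 𝕜 (b i) (b i) := by
  refine Summable.of_norm_bounded hl.abs fun i => ?_
  rw [norm_smul, norm_rankOne, b.orthonormal.norm_eq_one, RCLike.norm_ofReal, mul_one, mul_one]

theorem diagonalOperator_apply (hl : Summable l) (x : E) :
    b.diagonalOperator l x = ∑' i, ((l i : 𝕜) * inner 𝕜 (b i) x) • b i := by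
  refine ((ContinuousLinearMap.apply 𝕜 E x).map_tsum (b.summable_smul_rankOne hl)).trans ?_
  simp only [ContinuousLinearMap.apply_apply, smul_apply, rankOne_apply, smul_smul]

theorem diagonalOperator_apply_self (hl : Summable l) (i : ι) :
    b.diagonalOperator l (b i) = (l i : 𝕜) • b i := by
  rw [diagonalOperator_apply b hl, tsum_eq_single i fun j hji => by
    rw [b.orthonormal.inner_eq_zero hji, mul_zero, zero_smul]]
  rw [inner_self_eq_norm_sq_to_K, b.orthonormal.norm_eq_one]
  simp

theorem denseRange_diagonalOperator (hl : Summable l) (hl0 : ∀ i, l i ≠ 0) :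
    DenseRange (b.diagonalOperator l) := by
  have hspan :
      Submodule.span 𝕜 (Set.range b) ≤ LinearMap.range (b.diagonalOperator l).toLinearMap := by
    rw [Submodule.span_le]
    rintro _ ⟨i, rfl⟩
    refine ⟨(l i : 𝕜)⁻¹ • b i, ?_⟩
    rw [ContinuousLinearMap.coe_coe, map_smul, diagonalOperator_apply_self b hl, smul_smul,
      inv_mul_cancel₀ (RCLike.ofReal_ne_zero.2 (hl0 i)), one_smul]
  exact (Submodule.dense_iff_topologicalClosure_eq_top.2 b.dense_span).mono fun _ hx => hspan hx

end HilbertBasis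

theorem HilbertBasis.isPositiveTraceClass_diagonalOperator {ι : Type} (b : HilbertBasis ι ℂ H)
    {l : ι → ℝ} (hl : Summable l) (hl0 : ∀ i, 0 ≤ l i) :
    IsPositiveTraceClass (b.diagonalOperator l) :=
  ⟨ι, b, l, b.orthonormal, b.dense_span, hl, hl0, b.diagonalOperator_apply hl⟩

theorem IsSelfAdjoint.isUnit_sub_smul_one {A : Type*} [CStarAlgebra A] {a : A}
    (ha : IsSelfAdjoint a) {z : ℂ} (hz : z.im ≠ 0) : IsUnit (a - z • 1) := by
  have hz : z ∉ spectrum ℂ a := fun h => hz (ha.im_eq_zero_of_mem_spectrum h)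
  rw [← neg_sub, ← Algebra.algebraMap_eq_smul_one]
  exact (spectrum.notMem_iff.1 hz).neg

theorem IsSelfAdjoint.resolventMaximal_of_denseRange {A V : H →L[ℂ] H} (hA : IsSelfAdjoint A)
    (hV : DenseRange V) : ResolventMaximal A V := by
  set R := Ring.inverse (A - Complex.I • (1 : H →L[ℂ] H))
  have hu := hA.isUnit_sub_smul_one (z := Complex.I) (by simp)
  have hR : Function.Surjective R := fun y =>
    ⟨(A - Complex.I • 1) y, DFunLike.congr_fun (Ring.inverse_mul_cancel _ hu) y⟩
  rw [ResolventMaximal, ← Submodule.dense_iff_topologicalClosure_eq_top]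
  refine (hR.denseRange.comp hV R.continuous).mono ?_
  rintro _ ⟨x, rfl⟩
  exact Submodule.subset_span ⟨x, Complex.I, by simp, rfl⟩

/-- For every bounded self-adjoint operator `A` on a complex separable
Hilbert space there is a positive trace-class operator `V` such that the closed linear span
of `{(A−λ)⁻¹ V x : x ∈ H, Im λ ≠ 0}` is all of `H`. -/
theorem exists_positive_traceClass_resolventMaximal
    {H : Type*} [NormedAddCommGroup H] [InnerProductSpace ℂ H] [CompleteSpace H]
    [TopologicalSpace.SeparableSpace H]
    (A : H →L[ℂ] H) (hA : IsSelfAdjoint A) :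
    ∃ V : H →L[ℂ] H, IsPositiveTraceClass V ∧ ResolventMaximal A V := by
  obtain ⟨ι, _, ⟨b⟩⟩ := exists_countable_hilbertBasis ℂ H
  have := Encodable.ofCountable ι
  obtain ⟨l, hl_pos, _, hl, -⟩ := posSumOfEncodable one_pos ι
  exact ⟨b.diagonalOperator l,
    b.isPositiveTraceClass_diagonalOperator hl.summable fun i => (hl_pos i).le,
    hA.resolventMaximal_of_denseRange
      (b.denseRange_diagonalOperator hl.summable fun i => (hl_pos i).ne')⟩
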